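/- arXiv:1510.05780 — 3 statements merged into one kernel-verified Lean document; each statement's English description precedes it below -/
import Mathlib

section
/- Continuity of cycle-length formulas at Δ = δ₁: if δ₁ > 0 then T̃ + ln(1 - (a(e^{σ}-1)/β_L)e^{δ₁ - z̃₁}) equals T̃ + ln(1 + (a(e^{σ}-1)/β_U)e^{δ₁ - z̃₂} + (a(β_L+β_U)e^{τ + z̃₁ - z̃₂}/(β_U(β_L + a)))(e^{δ₁ - z̃₁} - 1)). -/
/-!
Write `D = βL e^σ + a (e^σ - 1)`. Unwinding the logarithms gives `e^{δ₁ - z̃₁} = βL / D`, so the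
left argument is `1 - a (e^σ - 1) / D`. On the right, `e^{δ₁ - z̃₁} - 1 = -(βL + a)(e^σ - 1) / D`,
and the two correction terms combine to `a (e^σ - 1) e^{-z̃₂} (βL e^{z̃₁} - (βL + βU) e^{τ + z̃₁}) / (βU D)`,
which is `-a (e^σ - 1) / D` by the identity `βL e^{z̃₁} + βU e^{z̃₂} = (βL + βU) e^{τ + z̃₁}`.
-/

open Real

lemma exp_log_div_sub_log_div {N D β : ℝ} (hN : 0 < N) (hD : 0 < D) (hβ : 0 < β) :
    exp (log (N / D) - log (N / β)) = β / D := by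
  rw [exp_sub, exp_log (by positivity), exp_log (by positivity)]
  field_simp

lemma mul_exp_add_mul_exp_log_eq {βL βU τ : ℝ} (hβL : 0 < βL) (hβU : 0 < βU) (hτ : 0 ≤ τ)
    (z : ℝ) :
    βL * exp z + βU * exp (z + τ + log ((βL * (1 - exp (-τ)) + βU) / βU)) =
      (βL + βU) * exp (τ + z) := by
  have hE : 0 < βL * (1 - exp (-τ)) + βU := by
    have : exp (-τ) ≤ 1 := exp_le_one_iff.mpr (by linarith)
    nlinarith
  rw [exp_add, exp_add, exp_log (by positivity), exp_add, exp_neg]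
  field_simp
  ring

lemma cycle_length_log_arg_eq {βL βU a s τ z1 z2 x : ℝ} (hβL : βL ≠ 0) (hβU : βU ≠ 0)
    (hLa : βL + a ≠ 0) (hD : βL * s + a * (s - 1) ≠ 0) (hx : x = βL / (βL * s + a * (s - 1)))
    (hz : βL * exp z1 + βU * exp z2 = (βL + βU) * exp (τ + z1)) :
    1 - a * (s - 1) / βL * x =
      1 + a * (s - 1) / βU * (x * exp (z1 - z2)) +
        a * (βL + βU) * exp (τ + z1 - z2) / (βU * (βL + a)) * (x - 1) := by
  have hexp : exp z2 ≠ 0 := (exp_pos z2).ne'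
  rw [exp_add] at hz
  rw [exp_sub, exp_sub, exp_add, hx]
  -- so that `hD` matches the denominator in `field_simp`'s normal form
  rw [mul_comm βL s] at hD ⊢
  field_simp
  linear_combination (-a * (s - 1) * (βL + a)) * hz

theorem stmt12_general (τ σ βL βU a z1 z2 Tper δ1 : ℝ)
    (hτ : 0 < τ) (hσ : 0 < σ)
    (hβL : 0 < βL) (hβU : 0 < βU) (ha : 0 < a)
    (hz1 : z1 = log ((βL + βU * (1 - exp (-τ))) / βL))
    (hz2 : z2 = z1 + τ + log ((βL * (1 - exp (-τ)) + βU) / βU))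
    (hδ1 : δ1 = log ((βL + βU * (1 - exp (-τ))) / (βL * exp σ + a * (exp σ - 1)))) :
    Tper + log (1 - a * (exp σ - 1) / βL * exp (δ1 - z1)) =
      Tper + log (1 + a * (exp σ - 1) / βU * exp (δ1 - z2) +
        a * (βL + βU) * exp (τ + z1 - z2) / (βU * (βL + a)) * (exp (δ1 - z1) - 1)) := by
  have hN : 0 < βL + βU * (1 - exp (-τ)) := by
    have : exp (-τ) ≤ 1 := exp_le_one_iff.mpr (by linarith)
    nlinarith
  have hD : 0 < βL * exp σ + a * (exp σ - 1) := by
    have : 1 ≤ exp σ := one_le_exp hσ.le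
    nlinarith
  have hx : exp (δ1 - z1) = βL / (βL * exp σ + a * (exp σ - 1)) := by
    rw [hδ1, hz1]
    exact exp_log_div_sub_log_div hN hD hβL
  have hz : βL * exp z1 + βU * exp z2 = (βL + βU) * exp (τ + z1) := by
    rw [hz2]
    exact mul_exp_add_mul_exp_log_eq hβL hβU hτ.le z1
  rw [show δ1 - z2 = (δ1 - z1) + (z1 - z2) by ring, exp_add,
    cycle_length_log_arg_eq hβL.ne' hβU.ne' (by positivity) hD.ne' hx hz]

theorem stmt12 (τ σ βL βU a z1 z2 Tper δ1 : ℝ)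
    (hτ : 0 < τ) (hσ : 0 < σ) (hστ : σ ≤ τ)
    (hβL : 0 < βL) (hβU : 0 < βU) (ha : 0 < a) (haU : a < βU)
    (hz1 : z1 = log ((βL + βU * (1 - exp (-τ))) / βL))
    (hz2 : z2 = z1 + τ + log ((βL * (1 - exp (-τ)) + βU) / βU))
    (hT : Tper = z2 + τ)
    (hδ1 : δ1 = log ((βL + βU * (1 - exp (-τ))) / (βL * exp σ + a * (exp σ - 1))))
    (hδ1pos : 0 < δ1) :
    Tper + log (1 - a * (exp σ - 1) / βL * exp (δ1 - z1)) =
      Tper + log (1 + a * (exp σ - 1) / βU * exp (δ1 - z2) +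
        a * (βL + βU) * exp (τ + z1 - z2) / (βU * (βL + a)) * (exp (δ1 - z1) - 1)) :=
  stmt12_general τ σ βL βU a z1 z2 Tper δ1 hτ hσ hβL hβU ha hz1 hz2 hδ1
end

section
/- Continuity of cycle-length formulas at Δ = δ₂: T̃ + ln(1 + (a(e^{σ}-1)/β_U)e^{δ₂ - z̃₂}) equals T̃ + ln(1 - (a(e^{σ}-1)/β_L)e^{δ₂ - z̃₁ - T̃} - (a(β_L+β_U)e^{-z̃₁}/(β_L(β_U - a)))(e^{δ₂ - z̃₂} - 1)), and both are strictly greater than T̃. -/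
/-!
Write `x = e^{δ₂ - z̃₂}` and `y = e^{-z̃₁}`. The definitions of `δ₂` and `z̃₁` say exactly that
`x (β_U e^σ - a (e^σ - 1)) = β_U` and `y (β_L + β_U (1 - e^{-τ})) = β_L`, while
`e^{δ₂ - z̃₁ - T̃} = x y e^{-τ}`. Under these two relations the two arguments of `ln` are the same
rational expression in `x`, and the first one exceeds `1` because `a (e^σ - 1) x / β_U > 0`.
-/

open Real

lemma cycle_length_args_eq {βL βU a q r x y : ℝ} (hβL : βL ≠ 0) (hβU : βU ≠ 0) (haU : βU - a ≠ 0)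
    (hx : x * (βU * q - a * (q - 1)) = βU) (hy : y * (βL + βU * (1 - r)) = βL) :
    1 - a * (q - 1) / βL * (x * y * r) - a * (βL + βU) * y / (βL * (βU - a)) * (x - 1) =
      1 + a * (q - 1) / βU * x := by
  field_simp
  linear_combination (a * (q - 1) * x * (βU - a)) * hy - (a * y * (βL + βU)) * hx

lemma exp_neg_log_div_mul {A B : ℝ} (hA : 0 < A) (hB : 0 < B) : exp (-log (A / B)) * A = B := by
  rw [← log_inv, inv_div, exp_log (div_pos hB hA), div_mul_cancel₀ B hA.ne']

lemma exp_neg_add_log_div_mul {σ βU a : ℝ} (hβU : 0 < βU) (hD : 0 < βU - a * (1 - exp (-σ))) :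
    exp (-σ + log (βU / (βU - a * (1 - exp (-σ))))) * (βU * exp σ - a * (exp σ - 1)) = βU := by
  have hσ : exp (-σ) * exp σ = 1 := by rw [← exp_add, neg_add_cancel, exp_zero]
  rw [exp_add, exp_log (div_pos hβU hD)]
  field_simp
  linear_combination (βU - a) * hσ

theorem stmt13_general (τ σ βL βU a z1 z2 Tper δ2 : ℝ)
    (hτ : 0 < τ) (hσ : 0 < σ)
    (hβL : 0 < βL) (hβU : 0 < βU) (ha : 0 < a) (haU : a < βU)
    (hz1 : z1 = log ((βL + βU * (1 - exp (-τ))) / βL))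
    (hT : Tper = z2 + τ)
    (hδ2 : δ2 = z2 - σ + log (βU / (βU - a * (1 - exp (-σ))))) :
    Tper + log (1 + a * (exp σ - 1) / βU * exp (δ2 - z2)) =
      Tper + log (1 - a * (exp σ - 1) / βL * exp (δ2 - z1 - Tper) -
        a * (βL + βU) * exp (-z1) / (βL * (βU - a)) * (exp (δ2 - z2) - 1)) ∧
    Tper < Tper + log (1 + a * (exp σ - 1) / βU * exp (δ2 - z2)) := by
  have hD : 0 < βU - a * (1 - exp (-σ)) := by nlinarith [exp_pos (-σ)]
  have hA : 0 < βL + βU * (1 - exp (-τ)) := by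
    nlinarith [exp_lt_one_iff.mpr (neg_neg_of_pos hτ)]
  have hx : exp (δ2 - z2) * (βU * exp σ - a * (exp σ - 1)) = βU := by
    rw [show δ2 - z2 = -σ + log (βU / (βU - a * (1 - exp (-σ)))) by rw [hδ2]; ring]
    exact exp_neg_add_log_div_mul hβU hD
  have hy : exp (-z1) * (βL + βU * (1 - exp (-τ))) = βL := hz1 ▸ exp_neg_log_div_mul hA hβL
  have hxyr : exp (δ2 - z1 - Tper) = exp (δ2 - z2) * exp (-z1) * exp (-τ) := by
    rw [← exp_add, ← exp_add, hT]
    ring_nf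
  refine ⟨by rw [hxyr, cycle_length_args_eq hβL.ne' hβU.ne' (sub_ne_zero.mpr haU.ne') hx hy], ?_⟩
  have hgain : 0 < a * (exp σ - 1) / βU * exp (δ2 - z2) := by
    have : 0 < exp σ - 1 := sub_pos.mpr (one_lt_exp_iff.mpr hσ)
    positivity
  linarith [log_pos (lt_add_of_pos_right 1 hgain)]

theorem stmt13 (τ σ βL βU a z1 z2 Tper δ2 : ℝ)
    (hτ : 0 < τ) (hσ : 0 < σ) (hστ : σ ≤ τ)
    (hβL : 0 < βL) (hβU : 0 < βU) (ha : 0 < a) (haU : a < βU)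
    (hz1 : z1 = log ((βL + βU * (1 - exp (-τ))) / βL))
    (hz2 : z2 = z1 + τ + log ((βL * (1 - exp (-τ)) + βU) / βU))
    (hT : Tper = z2 + τ)
    (hδ2 : δ2 = z2 - σ + log (βU / (βU - a * (1 - exp (-σ))))) :
    Tper + log (1 + a * (exp σ - 1) / βU * exp (δ2 - z2)) =
      Tper + log (1 - a * (exp σ - 1) / βL * exp (δ2 - z1 - Tper) -
        a * (βL + βU) * exp (-z1) / (βL * (βU - a)) * (exp (δ2 - z2) - 1)) ∧
    Tper < Tper + log (1 + a * (exp σ - 1) / βU * exp (δ2 - z2)) :=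
  stmt13_general τ σ βL βU a z1 z2 Tper δ2 hτ hσ hβL hβU ha haU hz1 hT hδ2
end

section
/- If β_U e^{σ-τ} < a (with 0 < a < β_U, 0 < σ ≤ τ) then g(T̃ - σ) > 0 and g(z̃₂) < 0, so the unique zero δ̄ of g lies in the open interval (z̃₂, T̃ - σ), where g(Δ) = a(e^{σ}-1)e^{Δ-T̃} + β_U e^{-τ} - β_U e^{z̃₂-Δ} and T̃ = z̃₂ + τ. -/
open Real

theorem stmt17 (τ σ βU a z2 Tper : ℝ)
    (hτ : 0 < τ) (hσ : 0 < σ) (hστ : σ ≤ τ)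
    (hβU : 0 < βU) (ha : 0 < a) (haU : a < βU)
    (h : βU * exp (σ - τ) < a)
    (hT : Tper = z2 + τ) :
    (a * (exp σ - 1) * exp ((Tper - σ) - Tper) + βU * exp (-τ) - βU * exp (z2 - (Tper - σ)) > 0) ∧
    (a * (exp σ - 1) * exp (z2 - Tper) + βU * exp (-τ) - βU * exp (z2 - z2) < 0) ∧
    (∀ δ : ℝ,
      a * (exp σ - 1) * exp (δ - Tper) + βU * exp (-τ) - βU * exp (z2 - δ) = 0 →
      z2 < δ ∧ δ < Tper - σ) := by
  subst hT
  have hs1 : 1 < exp σ := by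
    have := exp_lt_exp.mpr hσ; simpa using this
  have hsu : exp σ * exp (-σ) = 1 := by
    rw [← exp_add]; simp
  have hst : exp (σ - τ) = exp σ * exp (-τ) := by
    rw [← exp_add]; ring_nf
  have hst1 : exp (σ - τ) ≤ 1 := by
    have : σ - τ ≤ 0 := by linarith
    simpa using exp_le_exp.mpr (le_trans this (le_refl 0))
  have htpos : 0 < exp (-τ) := exp_pos _
  have hupos : 0 < exp (-σ) := exp_pos _
  -- a * exp(-σ) > βU * exp(-τ)
  have hkey : βU * exp (-τ) < a * exp (-σ) := by
    have := mul_lt_mul_of_pos_right h hupos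
    calc βU * exp (-τ) = βU * exp (σ - τ) * exp (-σ) := by
          rw [hst]; linear_combination (-(βU * exp (-τ))) * hsu
      _ < a * exp (-σ) := this
  have hg1 : a * (exp σ - 1) * exp ((z2 + τ - σ) - (z2 + τ)) + βU * exp (-τ)
      - βU * exp (z2 - (z2 + τ - σ)) > 0 := by
    have e1 : (z2 + τ - σ) - (z2 + τ) = -σ := by ring
    have e2 : z2 - (z2 + τ - σ) = σ - τ := by ring
    rw [e1, e2, hst]
    nlinarith [mul_pos (sub_pos.mpr hs1) (sub_pos.mpr hkey), hsu]
  have hg2 : a * (exp σ - 1) * exp (z2 - (z2 + τ)) + βU * exp (-τ)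
      - βU * exp (z2 - z2) < 0 := by
    have e1 : z2 - (z2 + τ) = -τ := by ring
    rw [e1]
    simp only [sub_self, exp_zero]
    have h1 : a * (exp σ - 1) < βU * (exp σ - 1) := by nlinarith
    have h2 : exp σ * exp (-τ) ≤ 1 := by rw [← hst]; exact hst1
    nlinarith
  refine ⟨hg1, hg2, fun δ hδ => ?_⟩
  constructor
  · by_contra hc
    push_neg at hc
    have h1 : exp (δ - (z2 + τ)) ≤ exp (z2 - (z2 + τ)) := exp_le_exp.mpr (by linarith)
    have h2 : exp (z2 - z2) ≤ exp (z2 - δ) := exp_le_exp.mpr (by linarith)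
    have hnn : 0 ≤ a * (exp σ - 1) := by nlinarith
    nlinarith [hg2, mul_le_mul_of_nonneg_left h1 hnn, mul_le_mul_of_nonneg_left h2 hβU.le]
  · by_contra hc
    push_neg at hc
    have h1 : exp ((z2 + τ - σ) - (z2 + τ)) ≤ exp (δ - (z2 + τ)) := exp_le_exp.mpr (by linarith)
    have h2 : exp (z2 - δ) ≤ exp (z2 - (z2 + τ - σ)) := exp_le_exp.mpr (by linarith)
    have hnn : 0 ≤ a * (exp σ - 1) := by nlinarith
    nlinarith [hg1, mul_le_mul_of_nonneg_left h1 hnn, mul_le_mul_of_nonneg_left h2 hβU.le]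
end
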